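/- One has N_0 = (), N_1 = (1), N_2 = (10), N_3 = (100, 101), and for every n ≥ 4, writing N_{n−1} = (w_0, …, w_{F_{n−1}−1}): (i) for each 0 ≤ m < F_{n−1} there is a unique q(m) ∈ {−2, −1, 0, 1, 2} of minimal absolute value such that 0 ≤ m + q(m) < F_{n−1} and w_{m+q(m)} ends with the digit 1; (ii) N_n is the concatenation, over m = 0, …, F_{n−1}−1, of the blocks V_m, where V_m = (w_m0) if q(m) = 0, V_m = (w_m0, w_m1) if q(m) ∈ {−1, 2}, and V_m = (w_m1, w_m0) if q(m) ∈ {−2, 1} (here w_m0 and w_m1 denote the word w_m with a final digit 0 or 1 appended). -/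

import Mathlib

/-- A ZF-word: a binary word (leftmost digit at the head of the list) with no two
consecutive digits `1`. -/
def ZFword (w : List Bool) : Prop :=
  w.Chain' fun a b => ¬(a = true ∧ b = true)

/-- The lists `N_n` of binary words: `N_0 = ()`, `N_1 = (1)` and, for `n ≥ 2`,
`N_n = 10·rev(N_{n-1}') ++ 10·rev(N_{n-2})`, where `L'` removes the leftmost letter
of each word of `L`, `rev` reverses the order of the list and `10·L` prefixes `10`
to each word of `L`. -/
def Nlist : ℕ → List (List Bool)
  | 0 => []
  | 1 => [[true]]
  | (n + 2) =>
      ((Nlist (n + 1)).map List.tail).reverse.map (fun w => true :: false :: w) ++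
        (Nlist n).reverse.map (fun w => true :: false :: w)

/-- The `i`-th term `g_i` (for `i ≥ 1`) of the infinite list
`G = N_1 ++ N_2 ++ N_3 ++ ⋯`; the block `N_n` occupies the (1-indexed) positions
`F (n+1), …, F (n+2) - 1` of `G`. -/
def Gword (i : ℕ) : List Bool :=
  (((List.range (i + 2)).map Nlist).flatten).getD (i - 1) []

/-- The Hamming distance of two binary words (leftmost digit at the head), the shorter
word being padded with leading `0`s: the number of positions (counted from the right)
at which the two words differ. -/
def hammingWords (w w' : List Bool) : ℕ :=
  ((Finset.range (max w.length w'.length)).filter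
    (fun i => w.reverse.getD i false ≠ w'.reverse.getD i false)).card

/-- `q` is an admissible shift at position `m` for the list `N_n`:
`q ∈ {-2,…,2}`, `0 ≤ m + q < F n`, and the word `w_{m+q}` of `N_n` ends with the
digit `1`. -/
def ValidShift (n m : ℕ) (q : ℤ) : Prop :=
  -2 ≤ q ∧ q ≤ 2 ∧ 0 ≤ (m : ℤ) + q ∧ (m : ℤ) + q < (Nat.fib n : ℤ) ∧
    ((Nlist n).getD ((m : ℤ) + q).toNat []).getLast? = some true

/-- The block `V_m` built from the word `w_m` of `N_n` and the shift `q = q(m)`. -/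
def Vblock (n m : ℕ) (q : ℤ) : List (List Bool) :=
  if q = 0 then [(Nlist n).getD m [] ++ [false]]
  else if q = -1 ∨ q = 2 then
    [(Nlist n).getD m [] ++ [false], (Nlist n).getD m [] ++ [true]]
  else [(Nlist n).getD m [] ++ [true], (Nlist n).getD m [] ++ [false]]

/-!
Let `b_n` be the list of last digits of the words of `N_n`. The recursion for `N_n` gives
`b_n = rev b_{n-1} ++ rev b_{n-2}` for `n ≥ 3`. Reversing a digit list reverses and negates its
list of minimal shifts, and gluing `u ++ v` keeps the minimal shifts of both halves as soon as `v`
begins with the last two digits of `u` in mirror order; this holds for `b_n`, because `b_{n-1}`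
begins with `rev b_{n-2}`. Hence the minimal shifts obey the same mirror recursion as `N_n`.
The block decomposition then propagates along the recursion: reversing a list of blocks reverses
each block and negates its shift (`V(w, -q) = rev V(w, q)`), while prepending `10` and deleting
the first digit act word by word and commute with appending the last digit.
-/

def digitAt (b : List Bool) (i : ℤ) : Bool :=
  if 0 ≤ i then b.getD i.toNat false else false

lemma digitAt_eq_true {b : List Bool} {i : ℤ} (h : digitAt b i = true) :
    0 ≤ i ∧ i < b.length := by
  unfold digitAt at h
  split_ifs at h with hi
  · refine ⟨hi, ?_⟩
    by_contra hlt
    rw [List.getD_eq_default _ _ (by omega)] at h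
    exact Bool.false_ne_true h

lemma digitAt_reverse (b : List Bool) (i : ℤ) :
    digitAt b.reverse i = digitAt b (b.length - 1 - i) := by
  unfold digitAt
  by_cases hlo : 0 ≤ i <;> by_cases hhi : i < b.length
  · rw [if_pos hlo, if_pos (by omega), List.getD_reverse _ (by omega)]
    congr 1; omega
  · rw [if_pos hlo, List.getD_eq_default _ _ (by simp; omega)]
    split_ifs
    · rw [List.getD_eq_default _ _ (by omega)]
    · rfl
  · rw [if_neg hlo, if_pos (by omega), List.getD_eq_default _ _ (by omega)]
  · omega

lemma digitAt_append (u v : List Bool) (i : ℤ) :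
    digitAt (u ++ v) i = if i < u.length then digitAt u i else digitAt v (i - u.length) := by
  unfold digitAt
  split_ifs with h0 hlt h1 <;> first | omega | rfl | skip
  · exact List.getD_append u v false _ (by omega)
  · rw [List.getD_append_right u v false _ (by omega)]
    congr 1; omega

lemma digitAt_take {b : List Bool} {n : ℕ} {i : ℤ} (h : i < n) :
    digitAt (b.take n) i = digitAt b i := by
  unfold digitAt
  split_ifs with hi
  · simp only [List.getD_eq_getElem?_getD, List.getElem?_take_of_lt (show i.toNat < n by omega)]
  · rfl

def IsShift (b : List Bool) (m q : ℤ) : Prop :=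
  q.natAbs ≤ 2 ∧ digitAt b (m + q) = true

def IsMinShift (b : List Bool) (m q : ℤ) : Prop :=
  IsShift b m q ∧ ∀ q', IsShift b m q' → q' = q ∨ q.natAbs < q'.natAbs

lemma IsMinShift.natAbs_le {b : List Bool} {m q q' : ℤ} (h : IsMinShift b m q)
    (h' : IsShift b m q') : q.natAbs ≤ q'.natAbs := by
  rcases h.2 q' h' with rfl | hlt
  · exact le_rfl
  · exact hlt.le

lemma IsShift.reverse {b : List Bool} {m q : ℤ} (h : IsShift b m q) :
    IsShift b.reverse (b.length - 1 - m) (-q) := by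
  refine ⟨by simpa using h.1, ?_⟩
  rw [digitAt_reverse, ← h.2]
  congr 1; ring

lemma IsMinShift.reverse {b : List Bool} {m q : ℤ} (h : IsMinShift b m q) :
    IsMinShift b.reverse (b.length - 1 - m) (-q) := by
  refine ⟨h.1.reverse, fun q' hq' => ?_⟩
  have hq'' : IsShift b m (-q') := by
    simpa [List.length_reverse] using hq'.reverse
  rcases h.2 _ hq'' with h' | h'
  · left; omega
  · right; simpa using h'

lemma IsMinShift.append_left {u v : List Bool} {m q : ℤ} (h : IsMinShift u m q)
    (hcross : ∀ i, digitAt v i = true → q.natAbs < u.length - m + i) :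
    IsMinShift (u ++ v) m q := by
  have hlt := (digitAt_eq_true h.1.2).2
  refine ⟨⟨h.1.1, by rw [digitAt_append, if_pos hlt, h.1.2]⟩, fun q' ⟨hq', hd⟩ => ?_⟩
  rw [digitAt_append] at hd
  split_ifs at hd with hin
  · exact h.2 q' ⟨hq', hd⟩
  · have := hcross _ hd
    omega

lemma IsMinShift.append_right {u v : List Bool} {m q : ℤ} (h : IsMinShift v m q)
    (hcross : ∀ i, digitAt u i = true → q.natAbs < u.length - i + m) :
    IsMinShift (u ++ v) (u.length + m) q := by
  have hge := (digitAt_eq_true h.1.2).1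
  refine ⟨⟨h.1.1, ?_⟩, fun q' ⟨hq', hd⟩ => ?_⟩
  · rw [digitAt_append, if_neg (by omega), ← h.1.2]
    congr 1; ring
  rw [digitAt_append] at hd
  split_ifs at hd with hin
  · have := hcross _ hd
    omega
  · exact h.2 q' ⟨hq', by rw [← hd]; congr 1; ring⟩

def IsMinShiftList (b : List Bool) (s : List ℤ) : Prop :=
  s.length = b.length ∧ ∀ m (hm : m < s.length), IsMinShift b m s[m]

lemma IsMinShiftList.natAbs_le_two {b : List Bool} {s : List ℤ} (h : IsMinShiftList b s) :
    ∀ q ∈ s, q.natAbs ≤ 2 := by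
  intro q hq
  obtain ⟨m, hm, rfl⟩ := List.getElem_of_mem hq
  exact (h.2 m hm).1.1

lemma IsMinShiftList.reverse {b : List Bool} {s : List ℤ} (h : IsMinShiftList b s) :
    IsMinShiftList b.reverse (s.reverse.map Neg.neg) := by
  refine ⟨by simp [h.1], fun m hm => ?_⟩
  simp only [List.length_map, List.length_reverse] at hm
  have hlen := h.1
  have key := (h.2 (s.length - 1 - m) (by omega)).reverse
  simp only [List.getElem_map, List.getElem_reverse]
  convert key using 2
  omega

/-- A digit `1` of `v` within distance `2` of the seam is mirrored by a digit `1` of `u` that is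
strictly closer to every position of `u`, and symmetrically. -/
lemma IsMinShiftList.append {u v : List Bool} {su sv : List ℤ} (hu : IsMinShiftList u su)
    (hv : IsMinShiftList v sv) (hmirror : v.take 2 = u.reverse.take 2) :
    IsMinShiftList (u ++ v) (su ++ sv) := by
  have hdigit : ∀ i : ℤ, i < 2 → digitAt v i = digitAt u (u.length - 1 - i) := by
    intro i hi
    rw [← digitAt_take (b := v) (n := 2) hi, hmirror, digitAt_take hi, digitAt_reverse]
  have hlen := hu.1
  refine ⟨by simp [hu.1, hv.1], fun m hm => ?_⟩
  rw [List.length_append] at hm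
  by_cases hmu : m < su.length
  · rw [List.getElem_append_left hmu]
    refine (hu.2 m hmu).append_left fun i hi => ?_
    have hle := (hu.2 m hmu).1.1
    have hi0 := (digitAt_eq_true hi).1
    by_cases hfar : 2 < (u.length : ℤ) - m + i
    · omega
    have hshift : IsShift u m (u.length - 1 - i - m) := by
      refine ⟨by omega, ?_⟩
      rw [show (m : ℤ) + (u.length - 1 - i - m) = u.length - 1 - i by ring,
        ← hdigit i (by omega), hi]
    have := (hu.2 m hmu).natAbs_le hshift
    omega
  · rw [List.getElem_append_right (by omega)]
    obtain ⟨m', rfl⟩ : ∃ m', m = su.length + m' := ⟨m - su.length, by omega⟩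
    have hm' : m' < sv.length := by omega
    have key := (hv.2 m' hm').append_right (u := u) fun i hi => ?_
    · simpa [hu.1] using key
    have hle := (hv.2 m' hm').1.1
    have hi1 := (digitAt_eq_true hi).2
    by_cases hfar : 2 < (u.length : ℤ) - i + m'
    · omega
    have hshift : IsShift v m' (u.length - 1 - i - m') := by
      refine ⟨by omega, ?_⟩
      rw [hdigit _ (by omega), ← hi]
      congr 1; ring
    have := (hv.2 m' hm').natAbs_le hshift
    omega

instance (b : List Bool) (m q : ℤ) : Decidable (IsShift b m q) :=
  inferInstanceAs (Decidable (_ ∧ _))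

lemma isMinShift_iff_bounded {b : List Bool} {m q : ℤ} :
    IsMinShift b m q ↔ IsShift b m q ∧
      ∀ q' ∈ ([-2, -1, 0, 1, 2] : List ℤ), IsShift b m q' →
        q' = q ∨ q.natAbs < q'.natAbs :=
  and_congr_right fun _ =>
    ⟨fun h q' _ => h q', fun h q' hq' => h q' (by have := hq'.1; simp; omega) hq'⟩

instance (b : List Bool) (m q : ℤ) : Decidable (IsMinShift b m q) :=
  decidable_of_iff _ isMinShift_iff_bounded.symm

instance (b : List Bool) (s : List ℤ) : Decidable (IsMinShiftList b s) :=
  inferInstanceAs (Decidable (_ ∧ _))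

def extBlock (w : List Bool) (q : ℤ) : List (List Bool) :=
  if q = 0 then [w ++ [false]]
  else if q = -1 ∨ q = 2 then [w ++ [false], w ++ [true]]
  else [w ++ [true], w ++ [false]]

lemma extBlock_neg (w : List Bool) {q : ℤ} (hq : q.natAbs ≤ 2) :
    extBlock w (-q) = (extBlock w q).reverse := by
  obtain ⟨h1, h2⟩ : -2 ≤ q ∧ q ≤ 2 := by omega
  interval_cases q <;> rfl

lemma map_extBlock {f : List Bool → List Bool} {w : List Bool}
    (hf : ∀ c, f (w ++ [c]) = f w ++ [c]) (q : ℤ) :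
    (extBlock w q).map f = extBlock (f w) q := by
  unfold extBlock
  split_ifs <;> simp [hf]

def extBlocks (L : List (List Bool)) (s : List ℤ) : List (List Bool) :=
  (List.zipWith extBlock L s).flatten

lemma extBlocks_nil_left (s : List ℤ) : extBlocks [] s = [] := rfl

lemma extBlocks_nil_right (L : List (List Bool)) : extBlocks L [] = [] := by
  cases L <;> rfl

lemma extBlocks_cons (w : List Bool) (L : List (List Bool)) (q : ℤ) (s : List ℤ) :
    extBlocks (w :: L) (q :: s) = extBlock w q ++ extBlocks L s := rfl

lemma extBlocks_append {L₁ L₂ : List (List Bool)} {s₁ s₂ : List ℤ}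
    (h : L₁.length = s₁.length) :
    extBlocks (L₁ ++ L₂) (s₁ ++ s₂) = extBlocks L₁ s₁ ++ extBlocks L₂ s₂ := by
  rw [extBlocks, List.zipWith_append h, List.flatten_append]; rfl

lemma extBlocks_map {f : List Bool → List Bool} {L : List (List Bool)}
    (hf : ∀ w ∈ L, ∀ c, f (w ++ [c]) = f w ++ [c]) (s : List ℤ) :
    extBlocks (L.map f) s = (extBlocks L s).map f := by
  induction L generalizing s with
  | nil => rfl
  | cons w L ih =>
    cases s with
    | nil => simp only [List.map_cons, extBlocks_nil_right, List.map_nil]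
    | cons q s =>
      simp only [List.map_cons, extBlocks_cons, List.map_append,
        map_extBlock (hf w List.mem_cons_self), ih (fun v hv => hf v (List.mem_cons_of_mem w hv))]

lemma extBlocks_reverse {L : List (List Bool)} {s : List ℤ} (hlen : L.length = s.length)
    (hs : ∀ q ∈ s, q.natAbs ≤ 2) :
    extBlocks L.reverse (s.reverse.map Neg.neg) = (extBlocks L s).reverse := by
  induction L generalizing s with
  | nil => rfl
  | cons w L ih =>
    obtain ⟨q, s, rfl⟩ := List.exists_cons_of_length_eq_add_one hlen.symm
    rw [List.reverse_cons, List.reverse_cons, List.map_append,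
      extBlocks_append (by simpa using hlen), extBlocks_cons, List.reverse_append,
      ih (by simpa using hlen) (fun q hq => hs q (List.mem_cons_of_mem _ hq))]
    simp [extBlocks_cons, extBlocks_nil_left, extBlock_neg w (hs q List.mem_cons_self)]

def mirrorStep (X Y : List (List Bool)) : List (List Bool) :=
  ((X.map List.tail).reverse ++ Y.reverse).map fun w => true :: false :: w

lemma mirrorStep_extBlocks {X Y : List (List Bool)} {s t : List ℤ} (hX : ∀ w ∈ X, w ≠ [])
    (hs : X.length = s.length) (ht : Y.length = t.length) (hs2 : ∀ q ∈ s, q.natAbs ≤ 2)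
    (ht2 : ∀ q ∈ t, q.natAbs ≤ 2) :
    mirrorStep (extBlocks X s) (extBlocks Y t) =
      extBlocks (mirrorStep X Y) (s.reverse.map Neg.neg ++ t.reverse.map Neg.neg) := by
  rw [mirrorStep, mirrorStep, extBlocks_map (fun _ _ _ => rfl),
    extBlocks_append (by simpa using hs), extBlocks_reverse (by simpa using hs) hs2,
    extBlocks_reverse ht ht2, extBlocks_map fun w hw c => List.tail_append_of_ne_nil (hX w hw)]

lemma extBlocks_eq_flatten_map_range {L : List (List Bool)} {s : List ℤ}
    (h : L.length = s.length) :
    extBlocks L s =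
      ((List.range L.length).map fun m => extBlock (L.getD m []) (s.getD m 0)).flatten := by
  rw [extBlocks]
  congr 1
  refine List.ext_getElem (by simp [h]) fun m h₁ h₂ => ?_
  simp only [List.getElem_zipWith, List.getElem_map, List.getElem_range]
  rw [List.getD_eq_getElem, List.getD_eq_getElem]

lemma length_Nlist : ∀ n, (Nlist n).length = Nat.fib n
  | 0 => rfl
  | 1 => rfl
  | n + 2 => by
    rw [Nlist, Nat.fib_add_two]
    simp [length_Nlist (n + 1), length_Nlist n, Nat.add_comm]

lemma Nlist_add_two (n : ℕ) : Nlist (n + 2) = mirrorStep (Nlist (n + 1)) (Nlist n) := by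
  rw [Nlist, mirrorStep, List.map_append]

lemma length_of_mem_Nlist : ∀ {n} {w : List Bool}, w ∈ Nlist n → w.length = n
  | 0, _, hw => by simp [Nlist] at hw
  | 1, _, hw => by simp_all [Nlist]
  | n + 2, w, hw => by
    simp only [Nlist, List.mem_append, List.mem_map, List.mem_reverse] at hw
    rcases hw with ⟨_, ⟨v, hv, rfl⟩, rfl⟩ | ⟨v, hv, rfl⟩
    · simp [length_of_mem_Nlist hv]
    · simp [length_of_mem_Nlist hv]

def lastDigits (n : ℕ) : List Bool :=
  (Nlist n).map fun w => w.getLastD false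

lemma length_lastDigits (n : ℕ) : (lastDigits n).length = Nat.fib n := by
  simp [lastDigits, length_Nlist]

lemma lastDigits_add_three (k : ℕ) :
    lastDigits (k + 3) = (lastDigits (k + 2)).reverse ++ (lastDigits (k + 1)).reverse := by
  rw [lastDigits, Nlist]
  simp only [lastDigits, List.map_append, List.map_reverse, List.map_map]
  congr 2
  · refine List.map_congr_left fun w hw => ?_
    have hlen : w.length = k + 2 := length_of_mem_Nlist hw
    match w, hlen with
    | a :: b :: t, _ => simp only [Function.comp, List.tail_cons, List.getLastD_cons]
  · simp only [Function.comp_def, List.getLastD_cons]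

def minShifts : ℕ → List ℤ
  | 0 => [1, 0]
  | 1 => [0, -1, -2]
  | k + 2 => (minShifts (k + 1)).reverse.map Neg.neg ++ (minShifts k).reverse.map Neg.neg

lemma isMinShiftList_minShifts : ∀ k, IsMinShiftList (lastDigits (k + 3)) (minShifts k)
  | 0 => by decide
  | 1 => by decide
  | k + 2 => by
    have hmirror : (lastDigits (k + 4)).take 2 = (lastDigits (k + 3)).reverse.take 2 := by
      rw [lastDigits_add_three (k + 1), List.take_append_of_le_length]
      have : 2 ≤ Nat.fib (k + 3) := Nat.fib_mono (by omega : 3 ≤ k + 3)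
      simpa [length_lastDigits] using this
    have h :=
      ((isMinShiftList_minShifts k).append (isMinShiftList_minShifts (k + 1)) hmirror).reverse
    simp only [List.reverse_append, List.map_append] at h
    rwa [lastDigits_add_three, minShifts]

lemma length_minShifts (k : ℕ) : (minShifts k).length = (Nlist (k + 3)).length := by
  rw [(isMinShiftList_minShifts k).1, length_lastDigits, length_Nlist]

lemma Nlist_add_four : ∀ k, Nlist (k + 4) = extBlocks (Nlist (k + 3)) (minShifts k)
  | 0 => by decide
  | 1 => by decide
  | k + 2 => by
    have hne : ∀ w ∈ Nlist (k + 4), w ≠ [] := by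
      rintro w hw rfl
      simpa using length_of_mem_Nlist hw
    calc Nlist (k + 6)
        = mirrorStep (extBlocks (Nlist (k + 4)) (minShifts (k + 1)))
            (extBlocks (Nlist (k + 3)) (minShifts k)) := by
          rw [Nlist_add_two, ← Nlist_add_four, ← Nlist_add_four]
      _ = extBlocks (Nlist (k + 5)) (minShifts (k + 2)) := by
          rw [mirrorStep_extBlocks hne (length_minShifts (k + 1)).symm (length_minShifts k).symm
            (isMinShiftList_minShifts (k + 1)).natAbs_le_two
            (isMinShiftList_minShifts k).natAbs_le_two, ← Nlist_add_two, minShifts]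

lemma validShift_iff_isShift (n m : ℕ) (q : ℤ) :
    ValidShift n m q ↔ IsShift (lastDigits n) m q := by
  have hdigit : ∀ i : ℤ, 0 ≤ i →
      (digitAt (lastDigits n) i = true ↔ ((Nlist n).getD i.toNat []).getLast? = some true) := by
    intro i hi
    rw [digitAt, if_pos hi, lastDigits]
    simp only [List.getD_eq_getElem?_getD, List.getElem?_map]
    rcases (Nlist n)[i.toNat]? with _ | w
    · simp
    · rcases h : w.getLast? with _ | _ | _ <;> simp [h]
  constructor
  · rintro ⟨h₁, h₂, h₃, -, h₅⟩
    exact ⟨by omega, (hdigit _ h₃).2 h₅⟩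
  · rintro ⟨h₁, h₂⟩
    obtain ⟨h₃, h₄⟩ := digitAt_eq_true h₂
    rw [length_lastDigits] at h₄
    exact ⟨by omega, by omega, h₃, h₄, (hdigit _ h₃).1 h₂⟩

lemma IsMinShift.validShift {n m : ℕ} {q : ℤ} (h : IsMinShift (lastDigits n) m q) :
    ValidShift n m q ∧ ∀ q', ValidShift n m q' → q.natAbs ≤ q'.natAbs :=
  ⟨(validShift_iff_isShift n m q).2 h.1,
    fun q' hq' => h.natAbs_le ((validShift_iff_isShift n m q').1 hq')⟩


/-- `N_0 = ()`, `N_1 = (1)`, `N_2 = (10)`, `N_3 = (100, 101)`, and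
for every `n ≥ 4`, writing `N_{n-1} = (w_0, …, w_{F (n-1) - 1})`: (i) for each
`0 ≤ m < F (n-1)` there is a unique `q(m) ∈ {-2, -1, 0, 1, 2}` of minimal absolute
value such that `0 ≤ m + q(m) < F (n-1)` and `w_{m + q(m)}` ends with the digit `1`;
(ii) `N_n` is the concatenation over `m = 0, …, F (n-1) - 1` of the blocks `V_m`,
where `V_m = (w_m 0)` if `q(m) = 0`, `V_m = (w_m 0, w_m 1)` if `q(m) ∈ {-1, 2}` and
`V_m = (w_m 1, w_m 0)` if `q(m) ∈ {-2, 1}`. -/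
theorem grayCode_demirrored :
    Nlist 0 = [] ∧ Nlist 1 = [[true]] ∧ Nlist 2 = [[true, false]] ∧
    Nlist 3 = [[true, false, false], [true, false, true]] ∧
    ∀ n, 4 ≤ n →
      (∀ m, m < Nat.fib (n - 1) →
        ∃! q : ℤ, ValidShift (n - 1) m q ∧
          ∀ q' : ℤ, ValidShift (n - 1) m q' → q.natAbs ≤ q'.natAbs) ∧
      ∃ Q : ℕ → ℤ,
        (∀ m, m < Nat.fib (n - 1) →
          ValidShift (n - 1) m (Q m) ∧
            ∀ q' : ℤ, ValidShift (n - 1) m q' → (Q m).natAbs ≤ q'.natAbs) ∧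
        Nlist n =
          ((List.range (Nat.fib (n - 1))).map (fun m => Vblock (n - 1) m (Q m))).flatten := by
  refine ⟨rfl, rfl, rfl, rfl, fun n hn => ?_⟩
  obtain ⟨k, rfl⟩ : ∃ k, n = k + 4 := ⟨n - 4, by omega⟩
  rw [show k + 4 - 1 = k + 3 from rfl]
  have hS := isMinShiftList_minShifts k
  have hQ : ∀ m < Nat.fib (k + 3),
      IsMinShift (lastDigits (k + 3)) m ((minShifts k).getD m 0) := by
    intro m hm
    have hm' : m < (minShifts k).length := by rw [hS.1, length_lastDigits]; exact hm
    rw [List.getD_eq_getElem _ _ hm']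
    exact hS.2 m hm'
  refine ⟨fun m hm => ⟨_, (hQ m hm).validShift, fun q ⟨hq, hmin⟩ => ?_⟩,
    fun m => (minShifts k).getD m 0, fun m hm => (hQ m hm).validShift, ?_⟩
  · rcases (hQ m hm).2 q ((validShift_iff_isShift _ _ _).1 hq) with h | h
    · exact h
    · exact absurd (hmin _ (hQ m hm).validShift.1) (by omega)
  · rw [Nlist_add_four, extBlocks_eq_flatten_map_range (length_minShifts k).symm,
      length_Nlist]
    rfl
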